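/- The Minkowski question mark function has no fixed point in the open interval (0, 1/3). -/

import Mathlib

open scoped Classical

/-- The Gauss map `x ↦ {1/x}`. -/
noncomputable def gaussMap (x : ℝ) : ℝ := Int.fract x⁻¹

/-- `cfDigit x n` is the `(n+1)`-st partial quotient `a_{n+1}` of the continued
fraction expansion `x = [a_1, a_2, …]` of `x ∈ (0,1)`. -/
noncomputable def cfDigit (x : ℝ) (n : ℕ) : ℤ := ⌊(gaussMap^[n] x)⁻¹⌋

/-- The Minkowski question mark function, via the Denjoy–Salem series
`?(x) = ∑_{k≥1} (-1)^{k+1} / 2^{a_1+⋯+a_k-1}` (a finite sum for rational `x`). -/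
noncomputable def minkowskiQ (x : ℝ) : ℝ :=
  ∑' k : ℕ, if ∀ i ≤ k, 0 < cfDigit x i then
      (-1 : ℝ) ^ k / (2 : ℝ) ^ ((∑ i ∈ Finset.range (k + 1), cfDigit x i) - 1)
    else 0

/-! The Denjoy–Salem series of `x` alternates in sign with antitone moduli, so it is bounded by
its first term: `?(x) ≤ 1/2^{a_1-1}` with `a_1 = ⌊1/x⌋ ≥ 3`. Since `1/x < a_1 + 1 ≤ 2^{a_1-1}`,
this gives `?(x) < x`. -/

open Finset

noncomputable def denjoyWeight (d : ℕ → ℤ) (k : ℕ) : ℝ :=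
  if ∀ i ≤ k, 0 < d i then ((2 : ℝ) ^ ((∑ i ∈ range (k + 1), d i) - 1))⁻¹ else 0

namespace denjoyWeight

variable (d : ℕ → ℤ)

theorem nonneg (k : ℕ) : 0 ≤ denjoyWeight d k := by
  unfold denjoyWeight
  split_ifs <;> positivity

theorem zero_of_pos (h : 0 < d 0) : denjoyWeight d 0 = ((2 : ℝ) ^ (d 0 - 1))⁻¹ := by
  simp [denjoyWeight, h]

theorem succ_le_half (k : ℕ) : denjoyWeight d (k + 1) ≤ denjoyWeight d k / 2 := by
  by_cases hpos : ∀ i ≤ k + 1, 0 < d i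
  · have hpos' : ∀ i ≤ k, 0 < d i := fun i hi => hpos i (by omega)
    have hsum : (∑ i ∈ range (k + 1), d i) + 1 ≤ ∑ i ∈ range (k + 2), d i := by
      rw [sum_range_succ _ (k + 1)]
      linarith [hpos (k + 1) le_rfl]
    have hpow : (2 : ℝ) * 2 ^ ((∑ i ∈ range (k + 1), d i) - 1)
        ≤ 2 ^ ((∑ i ∈ range (k + 2), d i) - 1) := by
      rw [← zpow_one_add₀ two_ne_zero]
      exact zpow_le_zpow_right₀ one_le_two (by omega)
    rw [denjoyWeight, denjoyWeight, if_pos hpos, if_pos hpos', div_eq_mul_inv, ← mul_inv,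
      mul_comm]
    exact inv_anti₀ (by positivity) hpow
  · rw [denjoyWeight, if_neg hpos]
    exact div_nonneg (nonneg d k) zero_le_two

theorem antitone : Antitone (denjoyWeight d) :=
  antitone_nat_of_succ_le fun k => (succ_le_half d k).trans (half_le_self (nonneg d k))

theorem summable : Summable (denjoyWeight d) := by
  refine summable_of_ratio_norm_eventually_le (r := 2⁻¹) (by norm_num) (Filter.Eventually.of_forall
    fun k => ?_)
  rw [Real.norm_of_nonneg (nonneg d _), Real.norm_of_nonneg (nonneg d _), inv_mul_eq_div]
  exact succ_le_half d k

end denjoyWeight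

theorem minkowskiQ_eq_tsum (x : ℝ) :
    minkowskiQ x = ∑' k, (-1 : ℝ) ^ k * denjoyWeight (cfDigit x) k := by
  refine tsum_congr fun k => ?_
  unfold denjoyWeight
  split_ifs <;> simp [div_eq_mul_inv]

theorem minkowskiQ_le_denjoyWeight_zero (x : ℝ) : minkowskiQ x ≤ denjoyWeight (cfDigit x) 0 := by
  rw [minkowskiQ_eq_tsum]
  simpa using (denjoyWeight.antitone _).tendsto_le_alternating_series
    (denjoyWeight.summable _).tendsto_alternating_series_tsum 0

theorem cfDigit_zero (x : ℝ) : cfDigit x 0 = ⌊x⁻¹⌋ := by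
  simp [cfDigit]

theorem add_one_le_two_zpow_sub_one {a : ℤ} (ha : 3 ≤ a) : (a : ℝ) + 1 ≤ 2 ^ (a - 1) := by
  obtain ⟨n, rfl⟩ : ∃ n : ℕ, a = n + 3 := ⟨(a - 3).toNat, by omega⟩
  have hn : (n : ℝ) + 1 ≤ 2 ^ n := by exact_mod_cast Nat.lt_two_pow_self
  rw [show (n : ℤ) + 3 - 1 = ((n + 2 : ℕ) : ℤ) by push_cast; ring, zpow_natCast, pow_add]
  push_cast
  linarith

theorem no_fixed_point_in_Ioo_zero_third :
    ∀ x ∈ Set.Ioo (0 : ℝ) (1 / 3), minkowskiQ x ≠ x := by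
  rintro x ⟨hx0, hx3⟩
  set a := cfDigit x 0 with ha
  have hinv : (3 : ℝ) < x⁻¹ := by
    rw [lt_inv_comm₀ three_pos hx0]
    linarith
  have h3a : 3 ≤ a := by
    rw [ha, cfDigit_zero, Int.le_floor]
    exact_mod_cast hinv.le
  have hxa : x⁻¹ < a + 1 := by
    rw [ha, cfDigit_zero]
    exact Int.lt_floor_add_one _
  refine ne_of_lt <| calc
    minkowskiQ x ≤ ((2 : ℝ) ^ (a - 1))⁻¹ := by
      rw [← denjoyWeight.zero_of_pos _ (by omega)]
      exact minkowskiQ_le_denjoyWeight_zero x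
    _ ≤ ((a : ℝ) + 1)⁻¹ := inv_anti₀ (by positivity) (add_one_le_two_zpow_sub_one h3a)
    _ < x := by
      rw [inv_lt_comm₀ (by positivity) hx0]
      exact hxa
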